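/- Let d ≥ 1 be an integer and let λ : ℤ^d → [0,∞) be summable. Suppose r ∈ (1,∞), ξ ∈ (0,1) and L* ∈ ℕ are such that for every real L' > L* one has ∑_{z ∈ ℤ^d, ‖z‖₁ > rL'} λ(z) ≤ ξ ∑_{z ∈ ℤ^d, ‖z‖₁ > L'} λ(z). Then for every real L with 2L > L* and every x ∈ ℤ^d with ‖x‖₁ ≤ L it holds that ∑_{y ∈ ℤ^d, ‖y‖₁ > L} λ(y − x) ≤ (1−ξ)^{−1} · ∑_{y ∈ ℤ^d, L < ‖y‖₁ ≤ (1+2r)L} λ(y − x). -/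

import Mathlib

/-!
Write `S` for the left-hand side and split it into the annulus part `A` and the far part
`F = ∑_{‖y‖₁ > (1+2r)L} λ(y−x)`. Since `‖x‖₁ ≤ L`, a far `y` has `‖y − x‖₁ > 2rL`, so `F` is at
most the tail of `λ` beyond `r(2L)`, which by hypothesis is at most `ξ` times the tail beyond `2L`;
and any `z` with `‖z‖₁ > 2L` gives `‖z + x‖₁ > L`, so that tail is at most `S`.
Hence `S ≤ A + ξ S`.
-/

open Classical

section IteSums

variable {α : Type*} {f : α → ℝ} (p q : α → Prop) [DecidablePred p] [DecidablePred q]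

theorem Summable.ite_zero (hf : Summable f) : Summable fun a => if p a then f a else 0 := by
  refine (hf.indicator {a | p a}).congr fun a => ?_
  simp [Set.indicator_apply]

theorem tsum_ite_eq_tsum_ite_and_add_tsum_ite_and_not (hf : Summable f) :
    (∑' a, if p a then f a else 0) =
      (∑' a, if p a ∧ q a then f a else 0) + ∑' a, if p a ∧ ¬q a then f a else 0 := by
  rw [← (hf.ite_zero _).tsum_add (hf.ite_zero _)]
  congr 1 with a
  by_cases hp : p a <;> by_cases hq : q a <;> simp [hp, hq]

variable {p q}

theorem tsum_ite_mono (hf : Summable f) (hf0 : ∀ a, 0 ≤ f a) (hpq : ∀ a, p a → q a) :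
    (∑' a, if p a then f a else 0) ≤ ∑' a, if q a then f a else 0 := by
  refine Summable.tsum_le_tsum (fun a => ?_) (hf.ite_zero p) (hf.ite_zero q)
  split_ifs with hp hq
  exacts [le_rfl, absurd (hpq a hp) hq, hf0 a, le_rfl]

end IteSums

section L1Norm

variable {ι : Type*} [Fintype ι]

def l1Norm (y : ι → ℤ) : ℝ := ∑ i, |(y i : ℝ)|

theorem l1Norm_add_le (y z : ι → ℤ) : l1Norm (y + z) ≤ l1Norm y + l1Norm z := by
  unfold l1Norm
  rw [← Finset.sum_add_distrib]
  gcongr with i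
  rw [Pi.add_apply, Int.cast_add]
  exact abs_add_le _ _

theorem l1Norm_sub_le (y z : ι → ℤ) : l1Norm (y - z) ≤ l1Norm y + l1Norm z := by
  unfold l1Norm
  rw [← Finset.sum_add_distrib]
  gcongr with i
  rw [Pi.sub_apply, Int.cast_sub]
  exact abs_sub _ _

theorem l1Norm_le_sub_add (y z : ι → ℤ) : l1Norm y ≤ l1Norm (y - z) + l1Norm z := by
  simpa using l1Norm_add_le (y - z) z

end L1Norm

theorem stmt_4_general (d : ℕ)
    (lam : (Fin d → ℤ) → ℝ) (hnn : ∀ y, 0 ≤ lam y) (hsum : Summable lam)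
    (r ξ : ℝ) (hξ0 : 0 < ξ) (hξ1 : ξ < 1) (Lstar : ℕ)
    (htail : ∀ L' : ℝ, (Lstar : ℝ) < L' →
      (∑' z : Fin d → ℤ, if r * L' < ∑ i, |((z i : ℝ))| then lam z else 0)
        ≤ ξ * ∑' z : Fin d → ℤ, if L' < ∑ i, |((z i : ℝ))| then lam z else 0)
    (L : ℝ) (hL : (Lstar : ℝ) < 2 * L) (x : Fin d → ℤ)
    (hx : ∑ i, |((x i : ℝ))| ≤ L) :
    (∑' y : Fin d → ℤ, if L < ∑ i, |((y i : ℝ))| then lam (y - x) else 0)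
      ≤ (1 - ξ)⁻¹ * ∑' y : Fin d → ℤ,
          if L < ∑ i, |((y i : ℝ))| ∧ ∑ i, |((y i : ℝ))| ≤ (1 + 2 * r) * L
          then lam (y - x) else 0 := by
  set f : (Fin d → ℤ) → ℝ := fun y => lam (y - x)
  have hf : Summable f := (Equiv.subRight x).summable_iff.2 hsum
  have hf0 : ∀ y, 0 ≤ f y := fun y => hnn (y - x)
  have hx : l1Norm x ≤ L := hx
  have tail_eq (c : ℝ) : (∑' z, if c < l1Norm z then lam z else 0) =
      ∑' y, if c < l1Norm (y - x) then f y else 0 :=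
    ((Equiv.subRight x).tsum_eq fun z => if c < l1Norm z then lam z else 0).symm
  change (∑' y, if L < l1Norm y then f y else 0) ≤
    (1 - ξ)⁻¹ * ∑' y, if L < l1Norm y ∧ l1Norm y ≤ (1 + 2 * r) * L then f y else 0
  set S := ∑' y, if L < l1Norm y then f y else 0
  set A := ∑' y, if L < l1Norm y ∧ l1Norm y ≤ (1 + 2 * r) * L then f y else 0
  have far_le : (∑' y, if L < l1Norm y ∧ ¬l1Norm y ≤ (1 + 2 * r) * L then f y else 0) ≤
      ∑' y, if r * (2 * L) < l1Norm (y - x) then f y else 0 :=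
    tsum_ite_mono hf hf0 fun y hy => by linarith [not_le.1 hy.2, l1Norm_le_sub_add y x]
  have tail_le : (∑' y, if 2 * L < l1Norm (y - x) then f y else 0) ≤ S :=
    tsum_ite_mono hf hf0 fun y hy => by linarith [l1Norm_sub_le y x]
  have tail_comparison : (∑' y, if r * (2 * L) < l1Norm (y - x) then f y else 0) ≤
      ξ * ∑' y, if 2 * L < l1Norm (y - x) then f y else 0 := by
    rw [← tail_eq, ← tail_eq]
    exact htail (2 * L) hL
  have split := tsum_ite_eq_tsum_ite_and_add_tsum_ite_and_not
    (fun y => L < l1Norm y) (fun y => l1Norm y ≤ (1 + 2 * r) * L) hf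
  have hS : S ≤ A + ξ * S := by linarith [mul_le_mul_of_nonneg_left tail_le hξ0.le]
  rw [inv_mul_eq_div, le_div_iff₀ (sub_pos.2 hξ1)]
  linarith

/-- If the summable nonnegative `λ : ℤ^d → [0,∞)` satisfies the tail
comparison `∑_{‖z‖₁ > rL'} λ(z) ≤ ξ ∑_{‖z‖₁ > L'} λ(z)` for every `L' > L*`, then
for every `L` with `2L > L*` and every `x` with `‖x‖₁ ≤ L`,
`∑_{‖y‖₁ > L} λ(y−x) ≤ (1−ξ)⁻¹ ∑_{L < ‖y‖₁ ≤ (1+2r)L} λ(y−x)`. -/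
theorem stmt_4 (d : ℕ) (hd : 1 ≤ d)
    (lam : (Fin d → ℤ) → ℝ) (hnn : ∀ y, 0 ≤ lam y) (hsum : Summable lam)
    (r ξ : ℝ) (hr : 1 < r) (hξ0 : 0 < ξ) (hξ1 : ξ < 1) (Lstar : ℕ)
    (htail : ∀ L' : ℝ, (Lstar : ℝ) < L' →
      (∑' z : Fin d → ℤ, if r * L' < ∑ i, |((z i : ℝ))| then lam z else 0)
        ≤ ξ * ∑' z : Fin d → ℤ, if L' < ∑ i, |((z i : ℝ))| then lam z else 0)
    (L : ℝ) (hL : (Lstar : ℝ) < 2 * L) (x : Fin d → ℤ)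
    (hx : ∑ i, |((x i : ℝ))| ≤ L) :
    (∑' y : Fin d → ℤ, if L < ∑ i, |((y i : ℝ))| then lam (y - x) else 0)
      ≤ (1 - ξ)⁻¹ * ∑' y : Fin d → ℤ,
          if L < ∑ i, |((y i : ℝ))| ∧ ∑ i, |((y i : ℝ))| ≤ (1 + 2 * r) * L
          then lam (y - x) else 0 :=
  stmt_4_general d lam hnn hsum r ξ hξ0 hξ1 Lstar htail L hL x hx
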